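/- Let (Σ, T) be a finite convergent length-reducing rewriting system with Σ = Σ^{-1} presenting a group G. If u_0, u_1, ..., u_m = u_0 is an isometrically embedded circuit in Γ(G, Σ) of length m > 2, then m = 2n+1 is odd and, setting x_i = u_{i-1}^{-1} u_i ∈ Σ, the pair (x_1 ⋯ x_{n+1}, x_m^{-1} ⋯ x_{n+2}^{-1}) is a rule in T. -/

import Mathlib

/-- A graph is geodetic if between any two vertices there is a unique shortest walk
(equivalently, a unique shortest path). -/
def IsGeodetic {V : Type*} (G : SimpleGraph V) : Prop :=
  ∀ u v : V, ∃! p : G.Walk u v, ∀ q : G.Walk u v, p.length ≤ q.length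

/-- `c : ZMod n → V` is an embedded circuit of length `n`: the vertices are distinct and
cyclically consecutive vertices are adjacent. -/
def IsEmbCircuit {V : Type*} (G : SimpleGraph V) (n : ℕ) (c : ZMod n → V) : Prop :=
  2 ≤ n ∧ Function.Injective c ∧ ∀ i : ZMod n, G.Adj (c i) (c (i + 1))

/-- An embedded circuit is isometrically embedded if the graph distance between any two of its
vertices equals the cyclic distance `min {j-i, n+i-j}` along the circuit. -/
def IsIEC {V : Type*} (G : SimpleGraph V) (n : ℕ) (c : ZMod n → V) : Prop :=
  IsEmbCircuit G n c ∧ ∀ i j : ZMod n, G.dist (c i) (c j) = min (j - i).val (i - j).val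

/-- One-step rewriting: replace a factor which is a left-hand side of a rule. -/
def RWStep {α : Type*} (T : Set (FreeMonoid α × FreeMonoid α)) (u v : FreeMonoid α) : Prop :=
  ∃ x y l r, (l, r) ∈ T ∧ u = x * l * y ∧ v = x * r * y

/-- Reflexive-transitive closure of one-step rewriting. -/
def RWReduces {α : Type*} (T : Set (FreeMonoid α × FreeMonoid α)) :
    FreeMonoid α → FreeMonoid α → Prop :=
  Relation.ReflTransGen (RWStep T)

/-- Terminating: no infinite chain of immediate reductions. -/
def RWTerminating {α : Type*} (T : Set (FreeMonoid α × FreeMonoid α)) : Prop :=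
  ¬ ∃ f : ℕ → FreeMonoid α, ∀ n : ℕ, RWStep T (f n) (f (n + 1))

/-- Confluent rewriting system. -/
def RWConfluent {α : Type*} (T : Set (FreeMonoid α × FreeMonoid α)) : Prop :=
  ∀ w x y, RWReduces T w x → RWReduces T w y →
    ∃ z, RWReduces T x z ∧ RWReduces T y z

/-- Length-reducing: every rule strictly decreases length. -/
def RWLengthReducing {α : Type*} (T : Set (FreeMonoid α × FreeMonoid α)) : Prop :=
  ∀ p ∈ T, (Prod.snd p).length < (Prod.fst p).length

/-- A word is irreducible if no rewriting step applies to it. -/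
def RWIrreducible {α : Type*} (T : Set (FreeMonoid α × FreeMonoid α)) (u : FreeMonoid α) : Prop :=
  ∀ v, ¬ RWStep T u v

/-- The congruence on `Σ*` generated by the rewriting rules. -/
def RWCon {α : Type*} (T : Set (FreeMonoid α × FreeMonoid α)) : Con (FreeMonoid α) :=
  conGen (RWStep T)

/-- The monoid presented by the rewriting system `(Σ, T)`. -/
abbrev RWMonoid {α : Type*} (T : Set (FreeMonoid α × FreeMonoid α)) :=
  (RWCon T).Quotient

/-- The class of a word in the presented monoid. -/
def RWclass {α : Type*} (T : Set (FreeMonoid α × FreeMonoid α)) (w : FreeMonoid α) :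
    RWMonoid T :=
  Con.mk' (RWCon T) w

/-- The undirected Cayley graph of a group `G` with respect to a set `S`:
distinct `g, h` are adjacent iff `g⁻¹ * h ∈ S ∪ S⁻¹`. -/
def CayleyGraph (G : Type*) [Group G] (S : Set G) : SimpleGraph G where
  Adj g h := g ≠ h ∧ g⁻¹ * h ∈ S ∪ S⁻¹
  symm := by
    refine ⟨?_⟩
    rintro g h ⟨hne, hm⟩
    refine ⟨hne.symm, ?_⟩
    have h2 : (g⁻¹ * h)⁻¹ ∈ S ∪ S⁻¹ := by
      rcases hm with hm | hm
      · exact Or.inr (by simpa using hm)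
      · exact Or.inl (by simpa using hm)
    simpa [mul_inv_rev] using h2
  loopless := ⟨fun g hg => hg.1 rfl⟩

/-!
In the Cayley graph of a group presented by a confluent length-reducing system, a word labelling
a geodesic is irreducible (a rewriting step would produce a shorter path with the same endpoints),
and by confluence two irreducible words with the same value coincide.

If an isometric circuit had even length `2n > 2`, its two halves would be geodesics from `u₀` to
the antipode `uₙ`, hence spelled by the same word, forcing `u₁ = u₋₁`. If `m = 2n + 1`, the word
`x₁ ⋯ xₙ₊₁` labels a path of length `n + 1` to a vertex at distance `n`, so it is reducible,
while its prefix and suffix of length `n` label geodesics and are irreducible: the word is itself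
a left-hand side, and its right-hand side, a word of length `n` with the same value, is the
irreducible word read backwards along the other half of the circuit.
-/

section Rewriting

variable {α : Type*} {T : Set (FreeMonoid α × FreeMonoid α)} {u v : FreeMonoid α}

theorem RWStep.mul_mul (h : RWStep T u v) (p q : FreeMonoid α) :
    RWStep T (p * u * q) (p * v * q) := by
  obtain ⟨x, y, l, r, hlr, rfl, rfl⟩ := h
  exact ⟨p * x, y * q, l, r, hlr, by simp only [mul_assoc], by simp only [mul_assoc]⟩

theorem RWStep.length_lt (hT : RWLengthReducing T) (h : RWStep T u v) : v.length < u.length := by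
  obtain ⟨x, y, l, r, hlr, rfl, rfl⟩ := h
  have := hT _ hlr
  simp only [FreeMonoid.length_mul] at this ⊢
  omega

theorem RWStep.rwclass_eq (h : RWStep T u v) : RWclass T u = RWclass T v :=
  (Con.eq (RWCon T)).mpr (ConGen.Rel.of _ _ h)

theorem RWStep.mem_of_irreducible_factors {w u' : FreeMonoid α} {a b : α} (h : RWStep T w v)
    (hw : w = .of a * u) (hw' : w = u' * .of b) (hu : RWIrreducible T u)
    (hu' : RWIrreducible T u') : (w, v) ∈ T := by
  obtain ⟨x, y, l, r, hlr, rfl, rfl⟩ := h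
  obtain rfl : x = 1 := by
    induction x using FreeMonoid.inductionOn' with
    | one => rfl
    | of_mul a' x' _ =>
      have hu_eq : u = x' * l * y := by
        have := congrArg FreeMonoid.toList hw
        simp only [FreeMonoid.toList_mul, FreeMonoid.toList_of, List.cons_append,
          List.nil_append, List.cons.injEq] at this
        exact FreeMonoid.toList.injective (by simp [← this.2])
      exact (hu _ ⟨x', y, l, r, hlr, hu_eq, rfl⟩).elim
  obtain rfl : y = 1 := by
    rcases List.eq_nil_or_concat' y.toList with hy | ⟨y', b', hy⟩
    · exact FreeMonoid.toList.injective hy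
    · have hu'_eq : u' = 1 * l * FreeMonoid.ofList y' := by
        have := congrArg FreeMonoid.toList hw'
        simp only [FreeMonoid.toList_mul, FreeMonoid.toList_of, hy, ← List.append_assoc] at this
        exact FreeMonoid.toList.injective (List.append_inj' this rfl).1.symm
      exact (hu' _ ⟨1, _, l, r, hlr, hu'_eq, rfl⟩).elim
  simpa using hlr

theorem RWReduces.mul {u' v' : FreeMonoid α} (hu : RWReduces T u u') (hv : RWReduces T v v') :
    RWReduces T (u * v) (u' * v') :=
  have hl : RWReduces T (u * v) (u' * v) :=
    hu.lift (· * v) fun a b h => by simpa using h.mul_mul 1 v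
  have hr : RWReduces T (u' * v) (u' * v') :=
    hv.lift (u' * ·) fun a b h => by simpa [mul_assoc] using h.mul_mul u' 1
  hl.trans hr

theorem RWConfluent.join_of_rwclass_eq (hconf : RWConfluent T)
    (h : RWclass T u = RWclass T v) : Relation.Join (RWReduces T) u v := by
  have hjoin : Equivalence (Relation.Join (Relation.ReflTransGen (RWStep T))) :=
    Relation.equivalence_join hconf
  have hcon : ConGen.Rel (RWStep T) u v := (Con.eq (RWCon T)).mp h
  clear h
  induction hcon with
  | of x y hxy => exact ⟨y, .single hxy, .refl⟩
  | refl x => exact hjoin.refl x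
  | symm _ ih => exact hjoin.symm ih
  | trans _ _ ih₁ ih₂ => exact hjoin.trans ih₁ ih₂
  | mul _ _ ih₁ ih₂ =>
    obtain ⟨z₁, hz₁, hz₁'⟩ := ih₁
    obtain ⟨z₂, hz₂, hz₂'⟩ := ih₂
    exact ⟨z₁ * z₂, hz₁.mul hz₂, hz₁'.mul hz₂'⟩

theorem RWIrreducible.eq_of_reduces (hu : RWIrreducible T u) (h : RWReduces T u v) : u = v := by
  rcases h.cases_head with h | ⟨w, hw, -⟩
  · exact h
  · exact (hu w hw).elim

theorem RWIrreducible.eq_of_rwclass_eq (hconf : RWConfluent T) (hu : RWIrreducible T u)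
    (hv : RWIrreducible T v) (h : RWclass T u = RWclass T v) : u = v := by
  obtain ⟨z, huz, hvz⟩ := hconf.join_of_rwclass_eq h
  rw [hu.eq_of_reduces huz, hv.eq_of_reduces hvz]

end Rewriting

section CayleyGraph

variable {A G : Type*} [Group G] (φ : FreeMonoid A →* G)

theorem cayleyGraph_edist_le_length (g : G) (w : FreeMonoid A) :
    (CayleyGraph G (Set.range fun a => φ (.of a))).edist g (g * φ w) ≤ w.length := by
  set Γ := CayleyGraph G (Set.range fun a => φ (.of a))
  induction w using FreeMonoid.inductionOn' generalizing g with
  | one => simp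
  | of_mul a w ih =>
    have hletter : Γ.edist g (g * φ (.of a)) ≤ 1 := by
      by_cases ha : φ (.of a) = 1
      · simp [ha]
      · have hadj : Γ.Adj g (g * φ (.of a)) := ⟨by simpa [eq_comm] using ha, .inl ⟨a, by simp⟩⟩
        exact (SimpleGraph.edist_eq_one_iff_adj.mpr hadj).le
    calc Γ.edist g (g * φ (.of a * w))
        ≤ Γ.edist g (g * φ (.of a)) + Γ.edist (g * φ (.of a)) (g * φ (.of a) * φ w) := by
          rw [map_mul, ← mul_assoc]; exact SimpleGraph.edist_triangle
      _ ≤ 1 + w.length := add_le_add hletter (ih _)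
      _ = (FreeMonoid.of a * w).length := by simp [add_comm]

theorem cayleyGraph_dist_le_length {g h : G} {w : FreeMonoid A} (hw : φ w = g⁻¹ * h) :
    (CayleyGraph G (Set.range fun a => φ (.of a))).dist g h ≤ w.length := by
  have := cayleyGraph_edist_le_length φ g w
  rw [hw, mul_inv_cancel_left] at this
  exact ENat.toNat_le_of_le_natCast this

theorem cayleyGraph_exists_of_adj (hinv : ∀ a, ∃ b, φ (.of b) = (φ (.of a))⁻¹) {g h : G}
    (hadj : (CayleyGraph G (Set.range fun a => φ (.of a))).Adj g h) :
    ∃ a, φ (.of a) = g⁻¹ * h := by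
  rcases hadj.2 with ⟨a, ha⟩ | ⟨a, ha⟩
  · exact ⟨a, ha⟩
  · obtain ⟨b, hb⟩ := hinv a
    exact ⟨b, by rw [hb, show φ (.of a) = (g⁻¹ * h)⁻¹ from ha, inv_inv]⟩

end CayleyGraph

namespace IsIEC

variable {V : Type*} {Γ : SimpleGraph V} {m : ℕ} {c : ZMod m → V}

theorem dist_add_natCast (hc : IsIEC Γ m c) (i : ZMod m) {d : ℕ} (hd : d < m) :
    Γ.dist (c i) (c (i + d)) = min d (m - d) := by
  have : NeZero m := ⟨by omega⟩
  rw [hc.2, add_sub_cancel_left, sub_add_cancel_left, ZMod.neg_val]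
  split_ifs with h0
  · obtain rfl : d = 0 := by simpa [ZMod.val_natCast_of_lt hd] using congrArg ZMod.val h0
    simp
  · rw [ZMod.val_natCast_of_lt hd]

theorem comp_neg (hc : IsIEC Γ m c) : IsIEC Γ m (fun i => c (-i)) := by
  obtain ⟨⟨hm, hinj, hadj⟩, hdist⟩ := hc
  refine ⟨⟨hm, hinj.comp neg_injective, fun i => ?_⟩, fun i j => ?_⟩
  · convert (hadj (-i - 1)).symm using 2 <;> ring
  · rw [hdist, min_comm]
    ring_nf

end IsIEC

theorem ZMod.natCast_sub_eq_neg {m j : ℕ} (h : j ≤ m) : ((m - j : ℕ) : ZMod m) = -j := by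
  rw [Nat.cast_sub h, ZMod.natCast_self, zero_sub]

section ArcWord

variable {A : Type*} {m : ℕ} (a : ZMod m → A) (i : ZMod m) (d : ℕ)

def arcWord : FreeMonoid A :=
  .ofList (List.ofFn fun k : Fin d => a (i + k))

@[simp]
theorem length_arcWord : (arcWord a i d).length = d :=
  List.length_ofFn

theorem arcWord_succ : arcWord a i (d + 1) = .of (a i) * arcWord a (i + 1) d := by
  apply FreeMonoid.toList.injective
  simp only [arcWord, List.ofFn_succ, FreeMonoid.toList_mul, FreeMonoid.toList_of,
    FreeMonoid.toList_ofList, Fin.val_zero, Fin.val_succ, Nat.cast_zero, add_zero, Nat.cast_succ,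
    add_right_comm _ (1 : ZMod m), List.singleton_append, add_assoc]

theorem arcWord_succ' : arcWord a i (d + 1) = arcWord a i d * .of (a (i + d)) := by
  simp only [arcWord, List.ofFn_succ', List.concat_eq_append, Fin.val_castSucc, Fin.val_last,
    FreeMonoid.ofList_append, FreeMonoid.ofList_singleton]

theorem get_toList_arcWord (k : ℕ) (hk : k < (arcWord a i d).toList.length) :
    (arcWord a i d).toList.get ⟨k, hk⟩ = a (i + k) :=
  List.get_ofFn _ _

theorem map_arcWord {G : Type*} [Group G] (φ : FreeMonoid A →* G) (c : ZMod m → G)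
    (ha : ∀ j, φ (.of (a j)) = (c j)⁻¹ * c (j + 1)) :
    φ (arcWord a i d) = (c i)⁻¹ * c (i + d) := by
  induction d with
  | zero => simp [arcWord]
  | succ d ih => rw [arcWord_succ', map_mul, ih, ha]; push_cast; group

end ArcWord

section Geodesic

variable {A G : Type*} [Group G]

def IsGeodesicWord (φ : FreeMonoid A →* G) (g h : G) (w : FreeMonoid A) : Prop :=
  φ w = g⁻¹ * h ∧ (CayleyGraph G (Set.range fun a => φ (.of a))).dist g h = w.length

def wordValue {T : Set (FreeMonoid A × FreeMonoid A)} (e : RWMonoid T ≃* G) :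
    FreeMonoid A →* G :=
  e.toMonoidHom.comp (RWCon T).mk'

@[simp]
theorem wordValue_apply {T : Set (FreeMonoid A × FreeMonoid A)} (e : RWMonoid T ≃* G)
    (w : FreeMonoid A) : wordValue e w = e (RWclass T w) :=
  rfl

variable {T : Set (FreeMonoid A × FreeMonoid A)} {e : RWMonoid T ≃* G} {g h : G}
  {w w' : FreeMonoid A}

theorem IsGeodesicWord.rwIrreducible (hT : RWLengthReducing T)
    (hw : IsGeodesicWord (wordValue e) g h w) : RWIrreducible T w := fun v hv => by
  have hv_val : wordValue e v = g⁻¹ * h := (congrArg e hv.rwclass_eq.symm).trans hw.1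
  have := cayleyGraph_dist_le_length _ hv_val
  have := hv.length_lt hT
  have := hw.2
  omega

theorem IsGeodesicWord.eq (hconf : RWConfluent T) (hT : RWLengthReducing T)
    (hw : IsGeodesicWord (wordValue e) g h w) (hw' : IsGeodesicWord (wordValue e) g h w') :
    w = w' :=
  (hw.rwIrreducible hT).eq_of_rwclass_eq hconf (hw'.rwIrreducible hT)
    (e.injective (hw.1.trans hw'.1.symm))

end Geodesic

section Circuit

variable {A G : Type*} [Group G] {m : ℕ} {c : ZMod m → G} {a b : ZMod m → A}

theorem IsEmbCircuit.exists_labels {φ : FreeMonoid A →* G}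
    (hinv : ∀ a, ∃ b, φ (.of b) = (φ (.of a))⁻¹)
    (hc : IsEmbCircuit (CayleyGraph G (Set.range fun a => φ (.of a))) m c) :
    ∃ a : ZMod m → A, ∀ j, φ (.of (a j)) = (c j)⁻¹ * c (j + 1) := by
  choose a ha using fun j => cayleyGraph_exists_of_adj φ hinv (hc.2.2 j)
  exact ⟨a, ha⟩

theorem IsIEC.isGeodesicWord_arcWord {φ : FreeMonoid A →* G}
    (hc : IsIEC (CayleyGraph G (Set.range fun a => φ (.of a))) m c)
    (ha : ∀ j, φ (.of (a j)) = (c j)⁻¹ * c (j + 1)) (i : ZMod m) {d : ℕ} (hd : 2 * d ≤ m) :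
    IsGeodesicWord φ (c i) (c (i + d)) (arcWord a i d) := by
  have := hc.1.1
  refine ⟨map_arcWord a i d φ c ha, ?_⟩
  rw [hc.dist_add_natCast i (by omega), length_arcWord]
  omega

variable {T : Set (FreeMonoid A × FreeMonoid A)} {e : RWMonoid T ≃* G}

theorem IsIEC.odd (hconf : RWConfluent T) (hT : RWLengthReducing T) (hm : 2 < m)
    (hc : IsIEC (CayleyGraph G (Set.range fun a => wordValue e (.of a))) m c)
    (ha : ∀ j, wordValue e (.of (a j)) = (c j)⁻¹ * c (j + 1))
    (hb : ∀ j, wordValue e (.of (b j)) = (c (-j))⁻¹ * c (-(j + 1))) : Odd m := by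
  by_contra hodd
  obtain ⟨n, rfl⟩ := Nat.not_odd_iff_even.mp hodd
  have : Fact (2 < n + n) := ⟨hm⟩
  obtain ⟨n, rfl⟩ : ∃ k, n = k + 1 := Nat.exists_eq_add_one.mpr (by omega)
  have hfwd := hc.isGeodesicWord_arcWord ha 0 (d := n + 1) (by omega)
  have hbwd := hc.comp_neg.isGeodesicWord_arcWord hb 0 (d := n + 1) (by omega)
  have hantipode : -((0 : ZMod (n + 1 + (n + 1))) + (n + 1 : ℕ)) = 0 + (n + 1 : ℕ) := by
    rw [zero_add, neg_eq_iff_add_eq_zero, ← Nat.cast_add, ZMod.natCast_self]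
  simp only [neg_zero, hantipode] at hbwd
  have hwords := hfwd.eq hconf hT hbwd
  rw [arcWord_succ, arcWord_succ] at hwords
  have hfirst : a 0 = b 0 := by simpa using congrArg (fun w => w.toList.head?) hwords
  have hc1 := ha 0
  rw [hfirst, hb 0] at hc1
  simp only [neg_zero, zero_add, mul_right_inj] at hc1
  exact ZMod.neg_one_ne_one (hc.1.2.1 hc1)

end Circuit

section OddCircuit

variable {A G : Type*} [Group G] {T : Set (FreeMonoid A × FreeMonoid A)} {e : RWMonoid T ≃* G}
  {n : ℕ} {c : ZMod (2 * n + 1) → G} {a b : ZMod (2 * n + 1) → A}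

theorem IsIEC.arcWord_mem (hconf : RWConfluent T) (hT : RWLengthReducing T)
    (hc : IsIEC (CayleyGraph G (Set.range fun a => wordValue e (.of a))) (2 * n + 1) c)
    (ha : ∀ j, wordValue e (.of (a j)) = (c j)⁻¹ * c (j + 1))
    (hb : ∀ j, wordValue e (.of (b j)) = (c (-j))⁻¹ * c (-(j + 1))) :
    (arcWord a 0 (n + 1), arcWord b 0 n) ∈ T := by
  have hn : 0 < n := by have := hc.1.1; omega
  have hbwd := hc.comp_neg.isGeodesicWord_arcWord hb 0 (d := n) (by omega)
  have hantipode : -((0 : ZMod (2 * n + 1)) + n) = 0 + (n + 1 : ℕ) := by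
    rw [zero_add, zero_add, ← ZMod.natCast_sub_eq_neg (by omega)]
    congr 1; omega
  simp only [neg_zero, hantipode] at hbwd
  have hdist := hc.dist_add_natCast 0 (d := n + 1) (by omega)
  have hval := map_arcWord a 0 (n + 1) (wordValue e) c ha
  have hred : ¬ RWIrreducible T (arcWord a 0 (n + 1)) := fun hirr => by
    have := congrArg FreeMonoid.length
      (hirr.eq_of_rwclass_eq hconf (hbwd.rwIrreducible hT) (e.injective (hval.trans hbwd.1.symm)))
    simp at this
  obtain ⟨v, hv⟩ : ∃ v, RWStep T (arcWord a 0 (n + 1)) v := by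
    simpa [RWIrreducible] using hred
  have hrule := hv.mem_of_irreducible_factors (arcWord_succ a 0 n) (arcWord_succ' a 0 n)
    ((hc.isGeodesicWord_arcWord ha (0 + 1) (d := n) (by omega)).rwIrreducible hT)
    ((hc.isGeodesicWord_arcWord ha 0 (d := n) (by omega)).rwIrreducible hT)
  have hv_val : wordValue e v = (c 0)⁻¹ * c (0 + (n + 1 : ℕ)) :=
    (congrArg e hv.rwclass_eq.symm).trans hval
  have hv_geod : IsGeodesicWord (wordValue e) (c 0) (c (0 + (n + 1 : ℕ))) v := by
    refine ⟨hv_val, le_antisymm (cayleyGraph_dist_le_length _ hv_val) ?_⟩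
    have := hv.length_lt hT
    simp only [length_arcWord] at this
    omega
  rwa [hv_geod.eq hconf hT hbwd] at hrule

end OddCircuit

theorem stmt17_general {A : Type} (T : Set (FreeMonoid A × FreeMonoid A))
    (hconf : RWConfluent T)
    (hlr : RWLengthReducing T) (G : Type*) [Group G] (e : RWMonoid T ≃* G)
    (hinv : ∀ a : A, ∃ b : A,
      e (RWclass T (FreeMonoid.of b)) = (e (RWclass T (FreeMonoid.of a)))⁻¹)
    (m : ℕ) (c : ZMod m → G) (hm : 2 < m)
    (hc : IsIEC (CayleyGraph G (Set.range fun a : A => e (RWclass T (FreeMonoid.of a)))) m c) :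
    ∃ n : ℕ, m = 2 * n + 1 ∧ ∃ w₁ w₂ : FreeMonoid A, (w₁, w₂) ∈ T ∧
      w₁.length = n + 1 ∧ w₂.length = n ∧
      (∀ (k : ℕ) (hk : k < w₁.toList.length),
        e (RWclass T (FreeMonoid.of (w₁.toList.get ⟨k, hk⟩))) =
          (c (k : ZMod m))⁻¹ * c ((k + 1 : ℕ) : ZMod m)) ∧
      (∀ (k : ℕ) (hk : k < w₂.toList.length),
        e (RWclass T (FreeMonoid.of (w₂.toList.get ⟨k, hk⟩))) =
          (c ((m - k : ℕ) : ZMod m))⁻¹ * c ((m - k - 1 : ℕ) : ZMod m)) := by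
  change IsIEC (CayleyGraph G (Set.range fun a => wordValue e (.of a))) m c at hc
  obtain ⟨a, ha⟩ := hc.1.exists_labels hinv
  obtain ⟨b, hb⟩ := hc.comp_neg.1.exists_labels hinv
  obtain ⟨n, rfl⟩ := hc.odd hconf hlr hm ha hb
  refine ⟨n, rfl, _, _, hc.arcWord_mem hconf hlr ha hb, length_arcWord .., length_arcWord ..,
    fun k hk => ?_, fun k hk => ?_⟩
  · rw [get_toList_arcWord]
    simpa using ha k
  · have hkn : k < n := hk.trans_eq (length_arcWord b 0 n)
    rw [get_toList_arcWord, zero_add, Nat.sub_sub, ZMod.natCast_sub_eq_neg (by omega),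
      ZMod.natCast_sub_eq_neg (by omega)]
    simpa using hb k

theorem stmt17 {A : Type} [Fintype A] (T : Set (FreeMonoid A × FreeMonoid A))
    (hT : T.Finite) (hterm : RWTerminating T) (hconf : RWConfluent T)
    (hlr : RWLengthReducing T) (G : Type*) [Group G] (e : RWMonoid T ≃* G)
    (hinv : ∀ a : A, ∃ b : A,
      e (RWclass T (FreeMonoid.of b)) = (e (RWclass T (FreeMonoid.of a)))⁻¹)
    (m : ℕ) (c : ZMod m → G) (hm : 2 < m)
    (hc : IsIEC (CayleyGraph G (Set.range fun a : A => e (RWclass T (FreeMonoid.of a)))) m c) :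
    ∃ n : ℕ, m = 2 * n + 1 ∧ ∃ w₁ w₂ : FreeMonoid A, (w₁, w₂) ∈ T ∧
      w₁.length = n + 1 ∧ w₂.length = n ∧
      (∀ (k : ℕ) (hk : k < w₁.toList.length),
        e (RWclass T (FreeMonoid.of (w₁.toList.get ⟨k, hk⟩))) =
          (c (k : ZMod m))⁻¹ * c ((k + 1 : ℕ) : ZMod m)) ∧
      (∀ (k : ℕ) (hk : k < w₂.toList.length),
        e (RWclass T (FreeMonoid.of (w₂.toList.get ⟨k, hk⟩))) =
          (c ((m - k : ℕ) : ZMod m))⁻¹ * c ((m - k - 1 : ℕ) : ZMod m)) :=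
  stmt17_general T hconf hlr G e hinv m c hm hc
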